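/- Let κ be a regular uncountable cardinal and U a normal ultrafilter on κ. Then 𝔱(U) ≤ 𝔟_κ, where 𝔱(U) is the least length of a ⊆*-decreasing sequence in U with no ⊆*-lower bound in U. -/

import Mathlib

open Cardinal Set

namespace PaperFormal

/-- `A` is unbounded in `κ` (as a set of ordinals below `κ`). -/
def UnboundedIn (κ : Ordinal.{0}) (A : Set Ordinal) : Prop :=
  ∀ α < κ, ∃ β ∈ A, α ≤ β

/-- `A ⊆* B`: almost inclusion (mod bounded) below `κ`. -/
def AlmostSub (κ : Ordinal.{0}) (A B : Set Ordinal) : Prop :=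
  ∃ α < κ, ∀ β ∈ A, α ≤ β → β ∈ B

/-- `C` is closed in `κ`. -/
def ClosedIn (κ : Ordinal.{0}) (C : Set Ordinal) : Prop :=
  ∀ α, α < κ → α ≠ 0 → (∀ β < α, (C ∩ Set.Ioo β α).Nonempty) → α ∈ C

/-- `C` is a club (closed unbounded set) in `κ`. -/
def IsClub (κ : Ordinal.{0}) (C : Set Ordinal) : Prop :=
  C ⊆ Set.Iio κ ∧ UnboundedIn κ C ∧ ClosedIn κ C

/-- `f` maps `κ` into `κ`. -/
def FunOn (κ : Ordinal.{0}) (f : Ordinal → Ordinal) : Prop :=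
  ∀ β < κ, f β < κ

/-- almost everywhere domination `f ≤* g` on `κ`. -/
def LeStar (κ : Ordinal.{0}) (f g : Ordinal → Ordinal) : Prop :=
  ∃ α < κ, ∀ β, α ≤ β → β < κ → f β ≤ g β

def UnboundedFunFam (κ : Ordinal.{0}) (𝒜 : Set (Ordinal → Ordinal)) : Prop :=
  (∀ f ∈ 𝒜, FunOn κ f) ∧ ∀ g, FunOn κ g → ∃ f ∈ 𝒜, ¬ LeStar κ f g

def DominatingFunFam (κ : Ordinal.{0}) (𝒜 : Set (Ordinal → Ordinal)) : Prop :=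
  (∀ f ∈ 𝒜, FunOn κ f) ∧ ∀ g, FunOn κ g → ∃ f ∈ 𝒜, LeStar κ g f

/-- the generalized bounding number `𝔟_κ`. -/
noncomputable def bNum (κ : Ordinal.{0}) : Cardinal :=
  sInf { μ : Cardinal.{0} | ∃ 𝒜, UnboundedFunFam κ 𝒜 ∧ #𝒜 = Cardinal.lift.{1} μ }

/-- the generalized dominating number `𝔡_κ`. -/
noncomputable def dNum (κ : Ordinal.{0}) : Cardinal :=
  sInf { μ : Cardinal.{0} | ∃ 𝒜, DominatingFunFam κ 𝒜 ∧ #𝒜 = Cardinal.lift.{1} μ }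

/-- a (proper) filter on `κ`. -/
structure IsKFilter (κ : Ordinal.{0}) (F : Set (Set Ordinal)) : Prop where
  subset : ∀ A ∈ F, A ⊆ Set.Iio κ
  univ_mem : Set.Iio κ ∈ F
  upward : ∀ A ∈ F, ∀ B, B ⊆ Set.Iio κ → A ⊆ B → B ∈ F
  inter : ∀ A ∈ F, ∀ B ∈ F, A ∩ B ∈ F
  proper : ∅ ∉ F

/-- an ultrafilter on `κ`. -/
structure IsKUltrafilter (κ : Ordinal.{0}) (U : Set (Set Ordinal)) extends IsKFilter κ U : Prop where
  decide : ∀ A, A ⊆ Set.Iio κ → A ∈ U ∨ (Set.Iio κ \ A) ∈ U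

/-- uniformity: every member is unbounded (equivalently, for regular `κ`, of size `κ`). -/
def Uniform (κ : Ordinal.{0}) (F : Set (Set Ordinal)) : Prop :=
  ∀ A ∈ F, UnboundedIn κ A

/-- `κ`-completeness. -/
def KComplete (κ : Ordinal.{0}) (F : Set (Set Ordinal)) : Prop :=
  ∀ s : Set (Set Ordinal), s ⊆ F → s.Nonempty → #s < Cardinal.lift.{1} κ.card → ⋂₀ s ∈ F

/-- closure under diagonal intersections. -/
def DiagClosed (κ : Ordinal.{0}) (F : Set (Set Ordinal)) : Prop :=
  ∀ A : Ordinal → Set Ordinal, (∀ i < κ, A i ∈ F) →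
    {β | β < κ ∧ ∀ i < β, β ∈ A i} ∈ F

/-- a normal ultrafilter on `κ`: `κ`-complete, contains all clubs, closed under
diagonal intersections. -/
def NormalUF (κ : Ordinal.{0}) (U : Set (Set Ordinal)) : Prop :=
  IsKUltrafilter κ U ∧ Uniform κ U ∧ KComplete κ U ∧
    (∀ C, IsClub κ C → C ∈ U) ∧ DiagClosed κ U

/-- `ℬ` is a `⊆*`-base for `F`. -/
def IsBase (κ : Ordinal.{0}) (F ℬ : Set (Set Ordinal)) : Prop :=
  ℬ ⊆ F ∧ ∀ A ∈ F, ∃ B ∈ ℬ, AlmostSub κ B A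

/-- the character of a filter. -/
noncomputable def chNum (κ : Ordinal.{0}) (F : Set (Set Ordinal)) : Cardinal :=
  sInf { μ : Cardinal.{0} | ∃ ℬ, IsBase κ F ℬ ∧ #ℬ = Cardinal.lift.{1} μ }

/-- there is a `⊆*`-decreasing `λ`-sequence in `F` with no `⊆*`-lower bound in `F`. -/
def HasTower (κ : Ordinal.{0}) (F : Set (Set Ordinal)) (lam : Cardinal) : Prop :=
  ∃ S : Ordinal → Set Ordinal, (∀ i < lam.ord, S i ∈ F) ∧
    (∀ i j, i < j → j < lam.ord → AlmostSub κ (S j) (S i)) ∧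
    ¬ ∃ Y ∈ F, ∀ i < lam.ord, AlmostSub κ Y (S i)

/-- the depth `𝔱(F)` of a filter. -/
noncomputable def tNum (κ : Ordinal.{0}) (F : Set (Set Ordinal)) : Cardinal :=
  sInf { μ : Cardinal.{0} | μ.IsRegular ∧ HasTower κ F μ }

/-- the ultrafilter number `𝔲_κ`. -/
noncomputable def uNum (κ : Ordinal.{0}) : Cardinal :=
  sInf { μ : Cardinal.{0} | ∃ U, IsKUltrafilter κ U ∧ Uniform κ U ∧ chNum κ U = μ }

/-- the complete ultrafilter number `𝔲^com_κ`. -/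
noncomputable def uComNum (κ : Ordinal.{0}) : Cardinal :=
  sInf { μ : Cardinal.{0} | ∃ U, IsKUltrafilter κ U ∧ Uniform κ U ∧ KComplete κ U ∧ chNum κ U = μ }

/-- `U` is a simple `P_λ`-point: a uniform ultrafilter with a `⊆*`-decreasing
generating sequence of length `λ`. -/
def SimplePPoint (κ : Ordinal.{0}) (lam : Cardinal) (U : Set (Set Ordinal)) : Prop :=
  IsKUltrafilter κ U ∧ Uniform κ U ∧
    ∃ S : Ordinal → Set Ordinal, (∀ i < lam.ord, S i ∈ U) ∧
      (∀ i j, i < j → j < lam.ord → AlmostSub κ (S j) (S i)) ∧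
      ∀ A ∈ U, ∃ i < lam.ord, AlmostSub κ (S i) A

/-- a `⊆*`-decreasing generating sequence of length `λ` for a filter `F`. -/
def SimplePFilter (κ : Ordinal.{0}) (lam : Cardinal) (F : Set (Set Ordinal)) : Prop :=
  ∃ S : Ordinal → Set Ordinal, (∀ i < lam.ord, S i ∈ F) ∧
    (∀ i j, i < j → j < lam.ord → AlmostSub κ (S j) (S i)) ∧
    ∀ A ∈ F, ∃ i < lam.ord, AlmostSub κ (S i) A

/-- `ℬ` is a `π`-base for `U`: unbounded sets, almost contained in members of `U`. -/
def IsPiBase (κ : Ordinal.{0}) (U ℬ : Set (Set Ordinal)) : Prop :=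
  (∀ B ∈ ℬ, B ⊆ Set.Iio κ ∧ UnboundedIn κ B) ∧ ∀ A ∈ U, ∃ B ∈ ℬ, AlmostSub κ B A

/-- the `π`-character `πch(U)`. -/
noncomputable def piChNum (κ : Ordinal.{0}) (U : Set (Set Ordinal)) : Cardinal :=
  sInf { μ : Cardinal.{0} | ∃ ℬ, IsPiBase κ U ℬ ∧ #ℬ = Cardinal.lift.{1} μ }

/-- `Y` is a pseudo-intersection of the family `𝒜`. -/
def IsPseudoInter (κ : Ordinal.{0}) (𝒜 : Set (Set Ordinal)) (Y : Set Ordinal) : Prop :=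
  Y ⊆ Set.Iio κ ∧ UnboundedIn κ Y ∧ ∀ A ∈ 𝒜, AlmostSub κ Y A

/-- `π𝔭(U)`: the least size of a subfamily of `U` with no pseudo-intersection. -/
noncomputable def piPNum (κ : Ordinal.{0}) (U : Set (Set Ordinal)) : Cardinal :=
  sInf { μ : Cardinal.{0} | ∃ 𝒜, 𝒜 ⊆ U ∧ #𝒜 = Cardinal.lift.{1} μ ∧ ¬ ∃ Y, IsPseudoInter κ 𝒜 Y }

/-- a `⊆*`-decreasing `λ`-sequence in `U` unbounded in `([κ]^κ, ⊇*)`. -/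
def HasPiTower (κ : Ordinal.{0}) (U : Set (Set Ordinal)) (lam : Cardinal) : Prop :=
  ∃ S : Ordinal → Set Ordinal, (∀ i < lam.ord, S i ∈ U) ∧
    (∀ i j, i < j → j < lam.ord → AlmostSub κ (S j) (S i)) ∧
    ¬ ∃ Y, Y ⊆ Set.Iio κ ∧ UnboundedIn κ Y ∧ ∀ i < lam.ord, AlmostSub κ Y (S i)

/-- `π𝔱(U)`. -/
noncomputable def piTNum (κ : Ordinal.{0}) (U : Set (Set Ordinal)) : Cardinal :=
  sInf { μ : Cardinal.{0} | μ.IsRegular ∧ HasPiTower κ U μ }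

/-- `A` splits `B`. -/
def Splits (κ : Ordinal.{0}) (A B : Set Ordinal) : Prop :=
  UnboundedIn κ (B ∩ A) ∧ UnboundedIn κ (B \ A)

/-- the splitting number `𝔰_κ`. -/
noncomputable def sNum (κ : Ordinal.{0}) : Cardinal :=
  sInf { μ : Cardinal.{0} | ∃ 𝒜 : Set (Set Ordinal), (∀ A ∈ 𝒜, A ⊆ Set.Iio κ) ∧
    (∀ X, X ⊆ Set.Iio κ → UnboundedIn κ X → ∃ A ∈ 𝒜, Splits κ A X) ∧ #𝒜 = Cardinal.lift.{1} μ }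

/-- the reaping number `𝔯_κ`. -/
noncomputable def rNum (κ : Ordinal.{0}) : Cardinal :=
  sInf { μ : Cardinal.{0} | ∃ 𝒜 : Set (Set Ordinal), (∀ A ∈ 𝒜, A ⊆ Set.Iio κ ∧ UnboundedIn κ A) ∧
    (¬ ∃ X, X ⊆ Set.Iio κ ∧ ∀ A ∈ 𝒜, Splits κ X A) ∧ #𝒜 = Cardinal.lift.{1} μ }

/-- `f` is almost one-to-one modulo `U`: bounded-to-one on a set in `U`. -/
def AlmostInjMod (κ : Ordinal.{0}) (U : Set (Set Ordinal)) (f : Ordinal → Ordinal) : Prop :=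
  ∃ X ∈ U, ∀ γ < κ, ∃ α < κ, ∀ β ∈ X, f β = γ → β < α

/-- the pushforward `f_*(U)`. -/
def PushFwd (κ : Ordinal.{0}) (f : Ordinal → Ordinal) (U : Set (Set Ordinal)) :
    Set (Set Ordinal) :=
  { A | A ⊆ Set.Iio κ ∧ (Set.Iio κ ∩ f ⁻¹' A) ∈ U }

/-- countable completeness. -/
def CountablyComplete (U : Set (Set Ordinal)) : Prop :=
  ∀ s : Set (Set Ordinal), s ⊆ U → s.Countable → s.Nonempty → ⋂₀ s ∈ U

/-! Let `𝔟 = 𝔟_κ`. Recursively dominating an unbounded family of size `𝔟` yields a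
`≤*`-increasing unbounded chain `⟨f_i : i < 𝔟⟩` of functions `κ → κ`; this also shows that `𝔟` is
regular. By normality the sets `C_i` of closure points of `f_i` lie in `U`, and they are
`⊆*`-decreasing. If `Y ∈ U` were almost contained in every `C_i`, then the function sending `β` to
the next element of `Y` above `β` would `≤*`-dominate every `f_i`. So `⟨C_i : i < 𝔟⟩` witnesses
`𝔱(U) ≤ 𝔟`. -/

open Order

section

variable {K : Ordinal.{0}}

theorem LeStar.trans {f g h : Ordinal → Ordinal} (hfg : LeStar K f g) (hgh : LeStar K g h) :
    LeStar K f h := by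
  obtain ⟨α, hα, hfg⟩ := hfg
  obtain ⟨α', hα', hgh⟩ := hgh
  exact ⟨max α α', max_lt hα hα', fun β hβ hβK =>
    (hfg β (le_of_max_le_left hβ) hβK).trans (hgh β (le_of_max_le_right hβ) hβK)⟩

theorem LeStar.refl (hK : 0 < K) (f : Ordinal → Ordinal) : LeStar K f f :=
  ⟨0, hK, fun _ _ _ => le_rfl⟩

def closurePoints (K : Ordinal.{0}) (f : Ordinal → Ordinal) : Set Ordinal :=
  {β | β < K ∧ ∀ γ < β, f γ < β}

noncomputable def nextIn (Y : Set Ordinal) (β : Ordinal) : Ordinal :=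
  sInf {y | y ∈ Y ∧ β < y}

structure IsUnboundedChain (K o : Ordinal.{0}) (F : Ordinal → Ordinal → Ordinal) : Prop where
  funOn : ∀ i < o, FunOn K (F i)
  mono : ∀ i j, i ≤ j → j < o → LeStar K (F i) (F j)
  unbounded : ∀ g, FunOn K g → ∃ i < o, ¬ LeStar K (F i) g

theorem Iio_inter_Ioi_mem {U : Set (Set Ordinal)} (hU : IsKUltrafilter K U) (hUnif : Uniform K U)
    (hK : IsSuccLimit K) {δ : Ordinal} (hδ : δ < K) : Iio K ∩ Ioi δ ∈ U := by
  refine (hU.decide _ inter_subset_left).resolve_right fun h => ?_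
  obtain ⟨β, ⟨hβK, hβδ⟩, hle⟩ := hUnif _ h (succ δ) (hK.succ_lt hδ)
  exact hβδ ⟨hβK, succ_le_iff.mp hle⟩

theorem closurePoints_mem {U : Set (Set Ordinal)} (hU : NormalUF K U) (hK : IsSuccLimit K)
    {f : Ordinal → Ordinal} (hf : FunOn K f) : closurePoints K f ∈ U := by
  -- `closurePoints K f` is the diagonal intersection of the tails above `f γ`
  have hdiag := hU.2.2.2.2 (fun γ => Iio K ∩ Ioi (f γ))
    fun γ hγ => Iio_inter_Ioi_mem hU.1 hU.2.1 hK (hf γ hγ)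
  exact hU.1.upward _ hdiag _ (fun β hβ => hβ.1) fun β hβ => ⟨hβ.1, fun γ hγ => (hβ.2 γ hγ).2⟩

theorem nextIn_mem (hK : IsSuccLimit K) {Y : Set Ordinal} (hY : UnboundedIn K Y) {β : Ordinal}
    (hβ : β < K) : nextIn Y β ∈ Y ∧ β < nextIn Y β := by
  obtain ⟨y, hy, hle⟩ := hY (succ β) (hK.succ_lt hβ)
  exact csInf_mem (s := {y | y ∈ Y ∧ β < y}) ⟨y, hy, succ_le_iff.mp hle⟩

theorem leStar_nextIn (hK : IsSuccLimit K) {Y : Set Ordinal} (hY : UnboundedIn K Y)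
    {f : Ordinal → Ordinal} (hYf : AlmostSub K Y (closurePoints K f)) : LeStar K f (nextIn Y) := by
  obtain ⟨α, hα, hsub⟩ := hYf
  refine ⟨α, hα, fun β hαβ hβ => ?_⟩
  obtain ⟨hmem, hlt⟩ := nextIn_mem hK hY hβ
  exact ((hsub _ hmem (hαβ.trans hlt.le)).2 β hlt).le

theorem exists_forall_lt_of_mk_lt {κ : Cardinal.{0}} (hκ : κ.IsRegular) {ι : Type u}
    (f : ι → Ordinal.{0}) (hι : #ι < Cardinal.lift.{u} κ) (hf : ∀ i, f i < κ.ord) :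
    ∃ δ < κ.ord, ∀ i, f i < δ := by
  have hbdd : BddAbove (range fun i => f i + 1) :=
    ⟨κ.ord, by rintro _ ⟨i, rfl⟩; exact add_one_le_of_lt (hf i)⟩
  refine ⟨⨆ i, f i + 1, Ordinal.lift_iSup_add_one_lt_of_lt_cof ?_ hf, fun i =>
    (lt_add_one (f i)).trans_le (le_ciSup hbdd i)⟩
  rwa [← Ordinal.lift_cof, hκ.cof_ord, Cardinal.lift_uzero]

theorem FunOn.exists_forall_lt {κ : Cardinal.{0}} (hκ : κ.IsRegular) {f : Ordinal → Ordinal}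
    (hf : FunOn κ.ord f) {θ : Ordinal} (hθ : θ < κ.ord) : ∃ δ < κ.ord, ∀ γ < θ, f γ < δ := by
  obtain ⟨δ, hδ, hlt⟩ := exists_forall_lt_of_mk_lt hκ (fun γ : Iio θ => f γ)
    (by rw [Cardinal.mk_Iio_ordinal, Cardinal.lift_lt]; exact Cardinal.lt_ord.mp hθ)
    fun γ => hf γ (γ.2.trans hθ)
  exact ⟨δ, hδ, fun γ hγ => hlt ⟨γ, hγ⟩⟩

theorem exists_funOn_forall_lt {κ : Cardinal.{0}} (hκ : κ.IsRegular)
    {s : Set (Ordinal → Ordinal)} (hs : ∀ f ∈ s, FunOn κ.ord f) (hcard : #s < Cardinal.lift.{1} κ) :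
    ∃ g, FunOn κ.ord g ∧ ∀ f ∈ s, ∀ β < κ.ord, f β < g β := by
  have hbound : ∀ β, ∃ δ, β < κ.ord → δ < κ.ord ∧ ∀ f : s, f.1 β < δ := fun β => by
    by_cases hβ : β < κ.ord
    · obtain ⟨δ, hδ, hlt⟩ :=
        exists_forall_lt_of_mk_lt hκ (fun f : s => f.1 β) hcard fun f => hs f f.2 β hβ
      exact ⟨δ, fun _ => ⟨hδ, hlt⟩⟩
    · exact ⟨0, fun h => absurd h hβ⟩
  choose g hg using hbound
  exact ⟨g, fun β hβ => (hg β hβ).1, fun f hf β hβ => (hg β hβ).2 ⟨f, hf⟩⟩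

theorem exists_unboundedFunFam (hK : IsSuccLimit K) :
    ∃ μ : Cardinal.{0}, ∃ 𝒜, UnboundedFunFam K 𝒜 ∧ #𝒜 = Cardinal.lift.{1} μ := by
  let Φ : (Iio K → Iio K) → Ordinal → Ordinal := fun p β => if hβ : β < K then p ⟨β, hβ⟩ else 0
  have hcard : #(range Φ) ≤ Cardinal.lift.{1} (K.card ^ K.card) := by
    refine Cardinal.mk_range_le.trans ?_
    simp [Cardinal.lift_power]
  obtain ⟨μ, hμ⟩ := Cardinal.mem_range_lift_of_le hcard
  refine ⟨μ, range Φ, ⟨?_, fun g hg => ?_⟩, hμ.symm⟩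
  · rintro _ ⟨p, rfl⟩ β hβ
    simp only [Φ, dif_pos hβ]
    exact (p ⟨β, hβ⟩).2
  · let p : Iio K → Iio K := fun x => ⟨succ (g x), hK.succ_lt (hg x x.2)⟩
    refine ⟨Φ p, mem_range_self p, ?_⟩
    rintro ⟨α, hα, hle⟩
    simpa [Φ, p, hα] using hle α le_rfl hα

theorem exists_unboundedFunFam_mk_bNum (hK : IsSuccLimit K) :
    ∃ 𝒜, UnboundedFunFam K 𝒜 ∧ #𝒜 = Cardinal.lift.{1} (bNum K) :=
  csInf_mem (exists_unboundedFunFam hK)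

theorem exists_leStar_bound_of_mk_lt_bNum {s : Set (Ordinal → Ordinal)} (hs : ∀ f ∈ s, FunOn K f)
    (hcard : #s < Cardinal.lift.{1} (bNum K)) : ∃ g, FunOn K g ∧ ∀ f ∈ s, LeStar K f g := by
  obtain ⟨μ, hμ, hμs⟩ := Cardinal.lt_lift_iff.mp hcard
  have hnot : ¬ UnboundedFunFam K s := fun h => notMem_of_lt_csInf' hμ ⟨s, h, hμs.symm⟩
  simpa using not_and.mp hnot hs

theorem le_bNum {κ : Cardinal.{0}} (hκ : κ.IsRegular) : κ ≤ bNum κ.ord := by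
  have hK := Cardinal.isSuccLimit_ord hκ.aleph0_le
  refine le_csInf (exists_unboundedFunFam hK) fun μ ⟨𝒜, h𝒜, hcard⟩ => le_of_not_gt fun hμ => ?_
  obtain ⟨g, hg, hlt⟩ := exists_funOn_forall_lt hκ h𝒜.1 (hcard ▸ Cardinal.lift_lt.mpr hμ)
  obtain ⟨f, hf, hnot⟩ := h𝒜.2 g hg
  exact hnot ⟨0, hK.bot_lt, fun β _ hβ => (hlt f hf β hβ).le⟩

theorem exists_mapsTo_surjOn_Iio_ord {α : Type (u + 1)} [Inhabited α] {s : Set α}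
    {μ : Cardinal.{u}} (h : #s = Cardinal.lift.{u + 1} μ) :
    ∃ e : Ordinal.{u} → α, MapsTo e (Iio μ.ord) s ∧ SurjOn e (Iio μ.ord) s := by
  obtain ⟨φ⟩ : Nonempty (Iio μ.ord ≃ s) :=
    Cardinal.eq.mp (by rw [h, Cardinal.mk_Iio_ordinal, Cardinal.card_ord])
  refine ⟨fun j => if hj : j < μ.ord then φ ⟨j, hj⟩ else default,
    fun j hj => by simp [show j < μ.ord from hj], fun x hx => ?_⟩
  obtain ⟨⟨j, hj⟩, hφ⟩ := φ.surjective ⟨x, hx⟩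
  exact ⟨j, hj, by simp [show j < μ.ord from hj, hφ]⟩

theorem exists_leStar_chain_above (hb : ℵ₀ ≤ bNum K) {a : Ordinal → Ordinal → Ordinal}
    (ha : ∀ i < (bNum K).ord, FunOn K (a i)) :
    ∃ F : Ordinal → Ordinal → Ordinal, ∀ i < (bNum K).ord,
      FunOn K (F i) ∧ LeStar K (a i) (F i) ∧ ∀ j < i, LeStar K (F j) (F i) := by
  let F : Ordinal → Ordinal → Ordinal := Ordinal.lt_wf.fix fun i F =>
    Classical.epsilon fun g => FunOn K g ∧ LeStar K (a i) g ∧ ∀ j (hj : j < i), LeStar K (F j hj) g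
  refine ⟨F, fun i => ?_⟩
  induction i using WellFoundedLT.induction with | _ i IH => ?_
  intro hi
  have hFi : F i = Classical.epsilon fun g =>
      FunOn K g ∧ LeStar K (a i) g ∧ ∀ j < i, LeStar K (F j) g :=
    Ordinal.lt_wf.fix_eq _ i
  have hprev : #(insert (a i) (range fun j : Iio i => F j) : Set (Ordinal → Ordinal)) <
      Cardinal.lift.{1} (bNum K) := by
    have hb' : ℵ₀ ≤ Cardinal.lift.{1} (bNum K) := Cardinal.aleph0_le_lift.mpr hb
    refine Cardinal.mk_insert_le.trans_lt
      (Cardinal.add_lt_of_lt hb' ?_ (one_lt_aleph0.trans_le hb'))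
    refine Cardinal.mk_range_le.trans_lt ?_
    rw [Cardinal.mk_Iio_ordinal, Cardinal.lift_lt]
    exact Cardinal.lt_ord.mp hi
  obtain ⟨g, hg, hle⟩ := exists_leStar_bound_of_mk_lt_bNum (by
    rintro _ (rfl | ⟨⟨j, hj⟩, rfl⟩)
    exacts [ha i hi, (IH j hj (hj.trans hi)).1]) hprev
  rw [hFi]
  exact Classical.epsilon_spec
    (p := fun g => FunOn K g ∧ LeStar K (a i) g ∧ ∀ j < i, LeStar K (F j) g)
    ⟨g, hg, hle _ (mem_insert _ _), fun j hj => hle _ (mem_insert_of_mem _ ⟨⟨j, hj⟩, rfl⟩)⟩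

theorem exists_isUnboundedChain {κ : Cardinal.{0}} (hκ : κ.IsRegular) :
    ∃ F, IsUnboundedChain κ.ord (bNum κ.ord).ord F := by
  have hK := Cardinal.isSuccLimit_ord hκ.aleph0_le
  obtain ⟨𝒜, h𝒜, hcard⟩ := exists_unboundedFunFam_mk_bNum hK
  obtain ⟨a, ha𝒜, h𝒜a⟩ := exists_mapsTo_surjOn_Iio_ord hcard
  obtain ⟨F, hF⟩ := exists_leStar_chain_above (hκ.aleph0_le.trans (le_bNum hκ))
    fun i hi => h𝒜.1 _ (ha𝒜 hi)
  refine ⟨F, fun i hi => (hF i hi).1, fun i j hij hj => ?_, fun g hg => ?_⟩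
  · rcases hij.lt_or_eq with hij | rfl
    exacts [(hF j hj).2.2 i hij, LeStar.refl hK.bot_lt _]
  · obtain ⟨f, hf, hfg⟩ := h𝒜.2 g hg
    obtain ⟨i, hi, rfl⟩ := h𝒜a hf
    exact ⟨i, hi, fun hFg => hfg ((hF i hi).2.1.trans hFg)⟩

theorem IsUnboundedChain.lift_bNum_le_mk {o : Ordinal} {F : Ordinal → Ordinal → Ordinal}
    (hF : IsUnboundedChain K o F) {s : Set Ordinal} (hs : s ⊆ Iio o)
    (hcof : ∀ j < o, ∃ i ∈ s, j ≤ i) : Cardinal.lift.{1} (bNum K) ≤ #s := by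
  by_contra! hlt
  obtain ⟨g, hg, hle⟩ := exists_leStar_bound_of_mk_lt_bNum (s := F '' s)
    (by rintro _ ⟨i, hi, rfl⟩; exact hF.funOn i (hs hi)) (Cardinal.mk_image_le.trans_lt hlt)
  obtain ⟨j, hj, hjg⟩ := hF.unbounded g hg
  obtain ⟨i, hi, hji⟩ := hcof j hj
  exact hjg ((hF.mono j i hji (hs hi)).trans (hle _ (mem_image_of_mem F hi)))

theorem bNum_isRegular {κ : Cardinal.{0}} (hκ : κ.IsRegular) : (bNum κ.ord).IsRegular := by
  obtain ⟨F, hF⟩ := exists_isUnboundedChain hκ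
  refine ⟨hκ.aleph0_le.trans (le_bNum hκ), ?_⟩
  rw [← Cardinal.lift_le.{1}, Ordinal.lift_cof, ← Ordinal.cof_Iio, Order.le_cof_iff]
  intro s hs
  rw [← Cardinal.mk_image_eq Subtype.val_injective]
  refine hF.lift_bNum_le_mk (by rintro _ ⟨i, _, rfl⟩; exact i.2) fun j hj => ?_
  obtain ⟨i, hi, hji⟩ := hs ⟨j, hj⟩
  exact ⟨i, mem_image_of_mem _ hi, hji⟩

theorem closurePoints_almostSub {κ : Cardinal.{0}} (hκ : κ.IsRegular) {f g : Ordinal → Ordinal}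
    (hf : FunOn κ.ord f) (hfg : LeStar κ.ord f g) :
    AlmostSub κ.ord (closurePoints κ.ord g) (closurePoints κ.ord f) := by
  obtain ⟨α, hα, hle⟩ := hfg
  obtain ⟨δ, hδ, hfδ⟩ := hf.exists_forall_lt hκ hα
  refine ⟨max α δ, max_lt hα hδ, fun β ⟨hβ, hgβ⟩ hαδβ => ⟨hβ, fun γ hγ => ?_⟩⟩
  rcases lt_or_ge γ α with hγα | hαγ
  · exact (hfδ γ hγα).trans_le (le_of_max_le_right hαδβ)
  · exact (hle γ hαγ (hγ.trans hβ)).trans_lt (hgβ γ hγ)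

theorem hasTower_of_isUnboundedChain {κ : Cardinal.{0}} (hκ : κ.IsRegular)
    {U : Set (Set Ordinal)} (hU : NormalUF κ.ord U) {lam : Cardinal.{0}}
    {F : Ordinal → Ordinal → Ordinal} (hF : IsUnboundedChain κ.ord lam.ord F) :
    HasTower κ.ord U lam := by
  have hK := Cardinal.isSuccLimit_ord hκ.aleph0_le
  refine ⟨fun i => closurePoints κ.ord (F i), fun i hi => closurePoints_mem hU hK (hF.funOn i hi),
    fun i j hij hj =>
      closurePoints_almostSub hκ (hF.funOn i (hij.trans hj)) (hF.mono i j hij.le hj), ?_⟩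
  rintro ⟨Y, hYU, hY⟩
  have hYK : Y ⊆ Iio κ.ord := hU.1.subset Y hYU
  have hYunb : UnboundedIn κ.ord Y := hU.2.1 Y hYU
  obtain ⟨i, hi, hFi⟩ := hF.unbounded (nextIn Y) fun β hβ => hYK (nextIn_mem hK hYunb hβ).1
  exact hFi (leStar_nextIn hK hYunb (hY i hi))

end

theorem stmt5_general (κ : Cardinal.{0}) (hreg : κ.IsRegular)
    (U : Set (Set Ordinal)) (hU : NormalUF κ.ord U) :
    tNum κ.ord U ≤ bNum κ.ord := by
  obtain ⟨F, hF⟩ := exists_isUnboundedChain hreg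
  exact csInf_le' ⟨bNum_isRegular hreg, hasTower_of_isUnboundedChain hreg hU hF⟩

/-- for a normal ultrafilter `U` on `κ`, `𝔱(U) ≤ 𝔟_κ`. -/
theorem stmt5 (κ : Cardinal.{0}) (hreg : κ.IsRegular) (hunc : Cardinal.aleph0 < κ)
    (U : Set (Set Ordinal)) (hU : NormalUF κ.ord U) :
    tNum κ.ord U ≤ bNum κ.ord :=
  stmt5_general κ hreg U hU

end PaperFormal
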